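/- There exists a constant C₂>1, depending only on C₀, such that the following holds: for any positive numbers 0 < ρ ≤ δ₋ ≤ δ₊ ≤ 1, any Lebesgue-measurable function δ:T²→ℝ with δ(T²) ⊆ [δ₋,δ₊], and any finite Borel measure ν on T², one has ‖ν‖²_δ ≤ C₂·(1 + log(δ₊/δ₋))·‖ν‖²_ρ. -/

import Mathlib

open MeasureTheory Metric Filter Topology
open scoped ENNReal

/-- The flat two-torus `ℝ²/ℤ²`, realized as the `L²`-product of two circles of length one. -/
abbrev T2 : Type := PiLp 2 fun _ : Fin 2 => AddCircle (1 : ℝ)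

noncomputable instance : MeasurableSpace T2 := borel T2
instance : BorelSpace T2 := ⟨rfl⟩
instance : CompactSpace T2 := (PiLp.homeomorph 2 fun _ : Fin 2 => AddCircle (1 : ℝ)).symm.compactSpace

/-- The condition `C₀⁻¹ ≤ dm/dLeb ≤ C₀` for the smooth measure `m` in terms of the Haar
probability measure `Leb`. -/
def DensityBounds (C₀ : ℝ) (Leb m : Measure T2) : Prop :=
  ∀ s : Set T2, MeasurableSet s →
    ENNReal.ofReal C₀⁻¹ * Leb s ≤ m s ∧ m s ≤ ENNReal.ofReal C₀ * Leb s

/-- The `ρ`-inner product `⟨ν,ν'⟩_ρ = ρ⁻⁴ ∫ ν(B(z,ρ)) ν'(B(z,ρ)) dm(z)`. -/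
noncomputable def rinner (m ν ν' : Measure T2) (ρ : ℝ) : ℝ :=
  (1 / ρ ^ 4) * ∫ z, (ν (ball z ρ)).toReal * (ν' (ball z ρ)).toReal ∂m

/-- The `ρ`-semi-norm `‖ν‖_ρ = ⟨ν,ν⟩_ρ^{1/2}`. -/
noncomputable def rnorm (m ν : Measure T2) (ρ : ℝ) : ℝ :=
  Real.sqrt (rinner m ν ν ρ)

/-- The generalized `r`-semi-norm (squared) for a variable radius function `r : T² → ℝ₊`:
`‖ν‖²_r = ∫ ν(B(x,r(x)))² / r(x)⁴ dm(x)`. -/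
noncomputable def rnormSqFun (m ν : Measure T2) (r : T2 → ℝ) : ℝ :=
  ∫ x, (ν (ball x (r x))).toReal ^ 2 / r x ^ 4 ∂m

/-! Since every `ρ`-ball has measure `≳ ρ²`, averaging `ν(B(z,ρ))` over `z ∈ B(x, δ + ρ)` gives
`ρ² ν(B(x,δ)) ≲ ∫_{B(x,2δ)} ν(B(z,ρ)) dz`, and Cauchy–Schwarz on a ball of measure `≲ δ²` gives
`ν(B(x,δ))² / δ⁴ ≲ ρ⁻⁴ δ⁻² ∫_{B(x,2δ)} ν(B(z,ρ))² dz`. Integrating in `x` and exchanging the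
integrals, each `z` receives the weight `∫ δ(x)⁻² 1[d(x,z) < 2δ(x)] dx`. Sorting the points `x`
by the dyadic scale of `δ(x)` bounds this weight by a constant times the number of dyadic scales
in `[δ₋, δ₊]`, which is `≲ 1 + log(δ₊/δ₋)`. The density bounds let one pass between `m` and
`Leb`. On `T²`, where `Leb` is the product of the circle measures by uniqueness of Haar measure,
the bounds `r² ≤ Leb(B(x,r)) ≤ 4r²` (for `r ≤ 1`) follow by comparing Euclidean balls with
sup-norm balls, which are products of arcs. -/

lemma sq_lintegral_le_measure_univ_mul {α : Type*} [MeasurableSpace α] (μ : Measure α)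
    {f : α → ℝ≥0∞} (hf : AEMeasurable f μ) :
    (∫⁻ a, f a ∂μ) ^ 2 ≤ μ Set.univ * ∫⁻ a, f a ^ 2 ∂μ := by
  have h := ENNReal.lintegral_mul_le_Lp_mul_Lq μ .two_two hf aemeasurable_const (g := fun _ => 1)
  simp only [Pi.mul_apply, mul_one, ENNReal.one_rpow, lintegral_const, one_mul] at h
  calc (∫⁻ a, f a ∂μ) ^ 2
      ≤ ((∫⁻ a, f a ^ (2 : ℝ) ∂μ) ^ (1 / 2 : ℝ) * μ Set.univ ^ (1 / 2 : ℝ)) ^ (2 : ℝ) := by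
        rw [← ENNReal.rpow_natCast]
        exact ENNReal.rpow_le_rpow h zero_le_two
    _ = μ Set.univ * ∫⁻ a, f a ^ 2 ∂μ := by
        rw [ENNReal.mul_rpow_of_nonneg _ _ zero_le_two, ← ENNReal.rpow_mul, ← ENNReal.rpow_mul]
        norm_num [mul_comm]

lemma exists_lt_two_pow_succ_le_log {R : ℝ} (hR : 1 ≤ R) :
    ∃ K : ℕ, R < 2 ^ (K + 1) ∧ (K : ℝ) ≤ 2 * Real.log R := by
  refine ⟨⌊Real.logb 2 R⌋₊, ?_, ?_⟩
  · have h := Nat.lt_floor_add_one (Real.logb 2 R)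
    rw [Real.logb_lt_iff_lt_rpow one_lt_two (by linarith)] at h
    exact_mod_cast h
  · calc (⌊Real.logb 2 R⌋₊ : ℝ) ≤ Real.logb 2 R :=
          Nat.floor_le (Real.logb_nonneg one_lt_two hR)
      _ ≤ 2 * Real.log R := by
        rw [Real.logb, div_le_iff₀ (Real.log_pos one_lt_two)]
        nlinarith [Real.log_two_gt_d9, Real.log_nonneg hR]

section Dyadic

variable {α : Type*} [PseudoMetricSpace α]

lemma indicator_inv_sq_le_sum_dyadic {δ : α → ℝ} {δm δp : ℝ} (hδm : 0 < δm)
    (hδ : ∀ x, δ x ∈ Set.Icc δm δp) {K : ℕ} (hK : δp < δm * 2 ^ (K + 1)) (z x : α) :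
    {x | dist z x < 2 * δ x}.indicator (fun x => ENNReal.ofReal (δ x ^ 2)⁻¹) x ≤
      ∑ k ∈ Finset.range (K + 1),
        (ball z (4 * (δm * 2 ^ k))).indicator (fun _ => ENNReal.ofReal ((δm * 2 ^ k) ^ 2)⁻¹) x := by
  by_cases hx : dist z x < 2 * δ x
  swap
  · simp [hx]
  obtain ⟨hδx, hδxp⟩ := hδ x
  obtain ⟨k, hk, hk'⟩ := exists_nat_pow_near ((one_le_div hδm).2 hδx) one_lt_two
  rw [le_div_iff₀ hδm, mul_comm] at hk
  rw [div_lt_iff₀ hδm, mul_comm, pow_succ] at hk'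
  have hkK : k < K + 1 := by
    refine (pow_lt_pow_iff_right₀ (M₀ := ℝ) one_lt_two).1 (lt_of_mul_lt_mul_left ?_ hδm.le)
    linarith
  have hxz : x ∈ ball z (4 * (δm * 2 ^ k)) := by
    rw [mem_ball, dist_comm]
    linarith
  refine le_trans ?_ (Finset.single_le_sum (fun i _ => zero_le) (Finset.mem_range.2 hkK))
  rw [Set.indicator_of_mem (show x ∈ {x | dist z x < 2 * δ x} from hx), Set.indicator_of_mem hxz]
  gcongr

lemma lintegral_indicator_inv_sq_le [MeasurableSpace α] [OpensMeasurableSpace α]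
    (μ : Measure α) {b : ℝ} (hμ : ∀ y s, 0 < s → μ (ball y s) ≤ ENNReal.ofReal (b * s ^ 2))
    {δ : α → ℝ} {δm δp : ℝ} (hδm : 0 < δm) (hδ : ∀ x, δ x ∈ Set.Icc δm δp) {K : ℕ}
    (hK : δp < δm * 2 ^ (K + 1)) (z : α) :
    ∫⁻ x, {x | dist z x < 2 * δ x}.indicator (fun x => ENNReal.ofReal (δ x ^ 2)⁻¹) x ∂μ ≤
      ENNReal.ofReal (16 * b * (K + 1)) := by
  calc _ ≤ ∫⁻ x, ∑ k ∈ Finset.range (K + 1), (ball z (4 * (δm * 2 ^ k))).indicator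
          (fun _ => ENNReal.ofReal ((δm * 2 ^ k) ^ 2)⁻¹) x ∂μ :=
        lintegral_mono (indicator_inv_sq_le_sum_dyadic hδm hδ hK z)
    _ = ∑ k ∈ Finset.range (K + 1),
          ENNReal.ofReal ((δm * 2 ^ k) ^ 2)⁻¹ * μ (ball z (4 * (δm * 2 ^ k))) := by
        rw [lintegral_finsetSum _ fun k _ => measurable_const.indicator measurableSet_ball]
        simp only [lintegral_indicator_const measurableSet_ball]
    _ ≤ ∑ _k ∈ Finset.range (K + 1), ENNReal.ofReal (16 * b) := by
        refine Finset.sum_le_sum fun k _ => ?_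
        have hs : 0 < δm * 2 ^ k := by positivity
        calc _ ≤ ENNReal.ofReal ((δm * 2 ^ k) ^ 2)⁻¹ *
              ENNReal.ofReal (b * (4 * (δm * 2 ^ k)) ^ 2) := by
              gcongr
              exact hμ z _ (by positivity)
          _ = ENNReal.ofReal (16 * b) := by
              rw [← ENNReal.ofReal_mul (by positivity)]
              congr 1
              field_simp
              ring
    _ = ENNReal.ofReal (16 * b * (K + 1)) := by
        rw [Finset.sum_const, Finset.card_range, nsmul_eq_mul,
          ENNReal.ofReal_mul' (by positivity : (0 : ℝ) ≤ K + 1), mul_comm,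
          ← ENNReal.ofReal_natCast]
        push_cast
        rfl

end Dyadic

section MetricMeasure

variable {α : Type*} [PseudoMetricSpace α] [MeasurableSpace α] [OpensMeasurableSpace α]
  [SecondCountableTopology α]

lemma measurableSet_dist_lt {r : α → ℝ} (hr : Measurable r) :
    MeasurableSet {p : α × α | dist p.2 p.1 < r p.1} :=
  measurableSet_lt (measurable_snd.dist measurable_fst) (hr.comp measurable_fst)

lemma measurable_measure_ball (ν : Measure α) [SFinite ν] {r : α → ℝ} (hr : Measurable r) :
    Measurable fun x => ν (ball x (r x)) :=
  measurable_measure_prodMk_left (measurableSet_dist_lt hr)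

lemma mul_measure_ball_le_setLIntegral (μ ν : Measure α) [SFinite μ] [SFinite ν] {a : ℝ≥0∞}
    {ρ : ℝ} (hμ : ∀ y, a ≤ μ (ball y ρ)) (x : α) (t : ℝ) :
    a * ν (ball x t) ≤ ∫⁻ z in ball x (t + ρ), ν (ball z ρ) ∂μ := by
  have hS := measurableSet_dist_lt (α := α) (r := fun _ => ρ) measurable_const
  calc a * ν (ball x t) = ∫⁻ _ in ball x t, a ∂ν := by rw [setLIntegral_const, mul_comm]
    _ ≤ ∫⁻ y in ball x t, μ.restrict (ball x (t + ρ)) (ball y ρ) ∂ν := by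
        refine setLIntegral_mono' measurableSet_ball fun y hy => ?_
        rw [Measure.restrict_eq_self _ (ball_subset_ball' ?_)]
        · exact hμ y
        · rw [mem_ball] at hy
          linarith
    _ ≤ ∫⁻ y, μ.restrict (ball x (t + ρ)) (ball y ρ) ∂ν := setLIntegral_le_lintegral _ _
    _ = (μ.restrict (ball x (t + ρ))).prod ν {p : α × α | dist p.2 p.1 < ρ} := by
        rw [Measure.prod_apply_symm hS]
        congr! 3 with y
        ext z
        simp [dist_comm]
    _ = ∫⁻ z in ball x (t + ρ), ν (ball z ρ) ∂μ := Measure.prod_apply hS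

lemma sq_mul_measure_ball_le (μ ν : Measure α) [SFinite μ] [SFinite ν] {a : ℝ≥0∞} {ρ r : ℝ}
    (hμ : ∀ y, a ≤ μ (ball y ρ)) (hρr : ρ ≤ r) (x : α) :
    (a * ν (ball x r)) ^ 2 ≤
      μ (ball x (2 * r)) * ∫⁻ z in ball x (2 * r), ν (ball z ρ) ^ 2 ∂μ := by
  calc (a * ν (ball x r)) ^ 2 ≤ (∫⁻ z in ball x (2 * r), ν (ball z ρ) ∂μ) ^ 2 := by
        gcongr
        exact (mul_measure_ball_le_setLIntegral μ ν hμ x r).trans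
          (lintegral_mono_set (ball_subset_ball (by linarith)))
    _ ≤ μ (ball x (2 * r)) * ∫⁻ z in ball x (2 * r), ν (ball z ρ) ^ 2 ∂μ := by
        simpa only [Measure.restrict_apply_univ] using
          sq_lintegral_le_measure_univ_mul (μ.restrict (ball x (2 * r)))
            (measurable_measure_ball ν measurable_const).aemeasurable

lemma measure_ball_sq_div_le (μ ν : Measure α) [SFinite μ] [SFinite ν] {a b ρ r : ℝ}
    (ha : 0 < a) (hρ : 0 < ρ) (hρr : ρ ≤ r)
    (hlow : ∀ y, ENNReal.ofReal (a * ρ ^ 2) ≤ μ (ball y ρ)) {x : α}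
    (hup : μ (ball x (2 * r)) ≤ ENNReal.ofReal (b * (2 * r) ^ 2)) :
    ν (ball x r) ^ 2 / ENNReal.ofReal (r ^ 4) ≤ ENNReal.ofReal (4 * b / (a ^ 2 * ρ ^ 4)) *
      (ENNReal.ofReal (r ^ 2)⁻¹ * ∫⁻ z in ball x (2 * r), ν (ball z ρ) ^ 2 ∂μ) := by
  have hr : 0 < r := hρ.trans_le hρr
  set I := ∫⁻ z in ball x (2 * r), ν (ball z ρ) ^ 2 ∂μ
  calc ν (ball x r) ^ 2 / ENNReal.ofReal (r ^ 4)
      = (ENNReal.ofReal (a * ρ ^ 2) * ν (ball x r)) ^ 2 *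
          ENNReal.ofReal ((a * ρ ^ 2) ^ 2 * r ^ 4)⁻¹ := by
        rw [div_eq_mul_inv, ← ENNReal.ofReal_inv_of_pos (by positivity), mul_pow,
          ← ENNReal.ofReal_pow (by positivity), mul_right_comm,
          ← ENNReal.ofReal_mul (by positivity), mul_comm]
        congr 2
        field_simp
    _ ≤ ENNReal.ofReal (b * (2 * r) ^ 2) * I * ENNReal.ofReal ((a * ρ ^ 2) ^ 2 * r ^ 4)⁻¹ := by
        gcongr
        exact (sq_mul_measure_ball_le μ ν hlow hρr x).trans (by gcongr)
    _ = ENNReal.ofReal (4 * b / (a ^ 2 * ρ ^ 4)) * (ENNReal.ofReal (r ^ 2)⁻¹ * I) := by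
        rw [mul_right_comm, ← ENNReal.ofReal_mul' (by positivity), ← mul_assoc,
          ← ENNReal.ofReal_mul' (by positivity)]
        congr 2
        field_simp
        ring

lemma lintegral_mul_setLIntegral_ball_comm (μ ν : Measure α) [SFinite μ] [SFinite ν]
    {r : α → ℝ} (hr : Measurable r) {w f : α → ℝ≥0∞} (hw : Measurable w) (hf : Measurable f) :
    ∫⁻ x, w x * ∫⁻ z in ball x (r x), f z ∂ν ∂μ =
      ∫⁻ z, f z * ∫⁻ x, {x | dist z x < r x}.indicator w x ∂μ ∂ν := by
  set S := {p : α × α | dist p.2 p.1 < r p.1}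
  have hleft : ∀ x z,
      w x * (ball x (r x)).indicator f z = S.indicator (fun p => w p.1 * f p.2) (x, z) := by
    intro x z
    by_cases h : dist z x < r x <;> simp [S, h]
  have hright : ∀ x z,
      f z * {x | dist z x < r x}.indicator w x = S.indicator (fun p => w p.1 * f p.2) (x, z) := by
    intro x z
    by_cases h : dist z x < r x <;> simp [S, h, mul_comm]
  calc ∫⁻ x, w x * ∫⁻ z in ball x (r x), f z ∂ν ∂μ
      = ∫⁻ x, ∫⁻ z, S.indicator (fun p => w p.1 * f p.2) (x, z) ∂ν ∂μ := by
        refine lintegral_congr fun x => ?_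
        rw [← lintegral_indicator measurableSet_ball,
          ← lintegral_const_mul _ (hf.indicator measurableSet_ball)]
        simp only [hleft]
    _ = ∫⁻ z, ∫⁻ x, S.indicator (fun p => w p.1 * f p.2) (x, z) ∂μ ∂ν :=
        lintegral_lintegral_swap ((((hw.comp measurable_fst).mul
          (hf.comp measurable_snd)).indicator (measurableSet_dist_lt hr)).aemeasurable)
    _ = ∫⁻ z, f z * ∫⁻ x, {x | dist z x < r x}.indicator w x ∂μ ∂ν := by
        refine lintegral_congr fun z => ?_
        rw [← lintegral_const_mul (f z)
          (hw.indicator (measurableSet_lt (measurable_const.dist measurable_id') hr))]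
        simp only [hright]

lemma lintegral_measure_ball_sq_div_le_of_lt_two_pow (μ ν : Measure α) [SFinite μ] [SFinite ν]
    {a b ρ δm δp : ℝ} (ha : 0 < a) (hb : 0 ≤ b) (hρ : 0 < ρ) (hρδ : ρ ≤ δm)
    (hlow : ∀ y, ENNReal.ofReal (a * ρ ^ 2) ≤ μ (ball y ρ))
    (hup : ∀ y s, 0 < s → μ (ball y s) ≤ ENNReal.ofReal (b * s ^ 2))
    {δ : α → ℝ} (hδ : Measurable δ) (hδmem : ∀ x, δ x ∈ Set.Icc δm δp) {K : ℕ}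
    (hK : δp < δm * 2 ^ (K + 1)) :
    ∫⁻ x, ν (ball x (δ x)) ^ 2 / ENNReal.ofReal (δ x ^ 4) ∂μ ≤
      ENNReal.ofReal (64 * b ^ 2 * (K + 1) / (a ^ 2 * ρ ^ 4)) * ∫⁻ z, ν (ball z ρ) ^ 2 ∂μ := by
  set g := fun z => ν (ball z ρ) ^ 2
  set w := fun x => ENNReal.ofReal (δ x ^ 2)⁻¹
  have hg : Measurable g := (measurable_measure_ball ν measurable_const).pow_const 2
  have hw : Measurable w := ENNReal.measurable_ofReal.comp (hδ.pow_const 2).inv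
  calc ∫⁻ x, ν (ball x (δ x)) ^ 2 / ENNReal.ofReal (δ x ^ 4) ∂μ
      ≤ ∫⁻ x, ENNReal.ofReal (4 * b / (a ^ 2 * ρ ^ 4)) *
          (w x * ∫⁻ z in ball x (2 * δ x), g z ∂μ) ∂μ := by
        refine lintegral_mono fun x => ?_
        have hx := hρδ.trans (hδmem x).1
        exact measure_ball_sq_div_le μ ν ha hρ hx hlow (hup x _ (by linarith))
    _ = ENNReal.ofReal (4 * b / (a ^ 2 * ρ ^ 4)) *
          ∫⁻ z, g z * ∫⁻ x, {x | dist z x < 2 * δ x}.indicator w x ∂μ ∂μ := by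
        rw [lintegral_const_mul' _ _ ENNReal.ofReal_ne_top,
          lintegral_mul_setLIntegral_ball_comm μ μ (hδ.const_mul 2) hw hg]
    _ ≤ ENNReal.ofReal (4 * b / (a ^ 2 * ρ ^ 4)) *
          ∫⁻ z, g z * ENNReal.ofReal (16 * b * (K + 1)) ∂μ := by
        gcongr with z
        exact lintegral_indicator_inv_sq_le μ hup (hρ.trans_le hρδ) hδmem hK z
    _ = ENNReal.ofReal (64 * b ^ 2 * (K + 1) / (a ^ 2 * ρ ^ 4)) * ∫⁻ z, g z ∂μ := by
        rw [lintegral_mul_const' _ _ ENNReal.ofReal_ne_top, mul_comm _ (ENNReal.ofReal _),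
          ← mul_assoc, ← ENNReal.ofReal_mul (by positivity)]
        congr 2
        ring

theorem lintegral_measure_ball_sq_div_le (μ m ν : Measure α) [SFinite μ] [SFinite ν]
    {a b : ℝ} (ha : 0 < a) (hb : 0 ≤ b) {C : ℝ≥0∞} (hm : m ≤ C • μ) (hμ : μ ≤ C • m)
    {ρ δm δp : ℝ} (hρ : 0 < ρ) (hρδ : ρ ≤ δm) (hδmp : δm ≤ δp)
    (hlow : ∀ y, ENNReal.ofReal (a * ρ ^ 2) ≤ μ (ball y ρ))
    (hup : ∀ y s, 0 < s → μ (ball y s) ≤ ENNReal.ofReal (b * s ^ 2))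
    {δ : α → ℝ} (hδ : Measurable δ) (hδmem : ∀ x, δ x ∈ Set.Icc δm δp) :
    ∫⁻ x, ν (ball x (δ x)) ^ 2 / ENNReal.ofReal (δ x ^ 4) ∂m ≤
      C ^ 2 * ENNReal.ofReal (128 * b ^ 2 * (1 + Real.log (δp / δm)) / (a ^ 2 * ρ ^ 4)) *
        ∫⁻ z, ν (ball z ρ) ^ 2 ∂m := by
  have hδm : 0 < δm := hρ.trans_le hρδ
  obtain ⟨K, hK, hKlog⟩ := exists_lt_two_pow_succ_le_log ((one_le_div hδm).2 hδmp)
  rw [div_lt_iff₀' hδm] at hK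
  calc ∫⁻ x, ν (ball x (δ x)) ^ 2 / ENNReal.ofReal (δ x ^ 4) ∂m
      ≤ C * ∫⁻ x, ν (ball x (δ x)) ^ 2 / ENNReal.ofReal (δ x ^ 4) ∂μ :=
        (lintegral_mono' hm le_rfl).trans_eq (lintegral_smul_measure _ _)
    _ ≤ C * (ENNReal.ofReal (64 * b ^ 2 * (K + 1) / (a ^ 2 * ρ ^ 4)) *
          (C * ∫⁻ z, ν (ball z ρ) ^ 2 ∂m)) := by
        gcongr
        refine (lintegral_measure_ball_sq_div_le_of_lt_two_pow μ ν ha hb hρ hρδ hlow hup hδ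
          hδmem hK).trans ?_
        gcongr
        exact (lintegral_mono' hμ le_rfl).trans_eq (lintegral_smul_measure _ _)
    _ = C ^ 2 * ENNReal.ofReal (64 * b ^ 2 * (K + 1) / (a ^ 2 * ρ ^ 4)) *
          ∫⁻ z, ν (ball z ρ) ^ 2 ∂m := by
        ring
    _ ≤ C ^ 2 * ENNReal.ofReal (128 * b ^ 2 * (1 + Real.log (δp / δm)) / (a ^ 2 * ρ ^ 4)) *
          ∫⁻ z, ν (ball z ρ) ^ 2 ∂m := by
        gcongr _ * ENNReal.ofReal ?_ * _
        exact div_le_div_of_nonneg_right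
          (by nlinarith [mul_nonneg (sq_nonneg b) (sub_nonneg.2 hKlog)]) (by positivity)

end MetricMeasure

namespace T2

open WithLp

variable (Leb : Measure T2) [IsProbabilityMeasure Leb] [Leb.IsAddHaarMeasure]

lemma map_ofLp_eq_volume : Leb.map ofLp = volume := by
  have : IsProbabilityMeasure (volume : Measure (AddCircle (1 : ℝ))) :=
    ⟨by simp [AddCircle.measure_univ]⟩
  let e : T2 ≃ₜ+ (Fin 2 → AddCircle (1 : ℝ)) :=
    { WithLp.addEquiv 2 _ with
      continuous_toFun := PiLp.continuous_ofLp 2 _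
      continuous_invFun := PiLp.continuous_toLp 2 _ }
  have : (Leb.map ofLp).IsAddHaarMeasure := e.isAddHaarMeasure_map Leb
  have : IsProbabilityMeasure (Leb.map ofLp) :=
    Measure.isProbabilityMeasure_map e.continuous.measurable.aemeasurable
  exact Measure.isAddHaarMeasure_eq_of_isProbabilityMeasure _ _

lemma measure_preimage_ofLp_closedBall (y : Fin 2 → AddCircle (1 : ℝ)) {r : ℝ} (hr : 0 ≤ r) :
    Leb (ofLp ⁻¹' closedBall y r) = ENNReal.ofReal (min 1 (2 * r)) ^ 2 := by
  rw [← Measure.map_apply (PiLp.continuous_ofLp 2 _).measurable measurableSet_closedBall,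
    map_ofLp_eq_volume, closedBall_pi _ hr, volume_pi_pi]
  simp [AddCircle.volume_closedBall, sq]

lemma measure_ball_le (x : T2) {r : ℝ} (hr : 0 ≤ r) :
    Leb (ball x r) ≤ ENNReal.ofReal (4 * r ^ 2) := by
  have hsub : ball x r ⊆ ofLp ⁻¹' closedBall (ofLp x) r := fun y hy =>
    (dist_pi_le_iff hr).2 fun i => (PiLp.dist_apply_le y x i).trans (mem_ball.1 hy).le
  calc Leb (ball x r) ≤ ENNReal.ofReal (min 1 (2 * r)) ^ 2 :=
        (measure_mono hsub).trans (measure_preimage_ofLp_closedBall Leb _ hr).le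
    _ ≤ ENNReal.ofReal (4 * r ^ 2) := by
        rw [← ENNReal.ofReal_pow (by positivity)]
        gcongr
        nlinarith [min_le_right 1 (2 * r), le_min zero_le_one (by linarith : 0 ≤ 2 * r)]

lemma le_measure_ball (x : T2) {r : ℝ} (hr0 : 0 < r) (hr1 : r ≤ 1) :
    ENNReal.ofReal (r ^ 2) ≤ Leb (ball x r) := by
  have hsub : ofLp ⁻¹' closedBall (ofLp x) (r / 2) ⊆ ball x r := by
    intro y hy
    have hi := (dist_pi_le_iff (by positivity)).1 (mem_closedBall.1 hy)
    have hsq : dist y x ^ 2 < r ^ 2 := by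
      rw [PiLp.dist_sq_eq_of_L2, Fin.sum_univ_two]
      nlinarith [hi 0, hi 1, dist_nonneg (x := y 0) (y := x 0), dist_nonneg (x := y 1) (y := x 1)]
    exact mem_ball.2 (abs_lt_of_sq_lt_sq' hsq hr0.le).2
  calc ENNReal.ofReal (r ^ 2) = ENNReal.ofReal (min 1 (2 * (r / 2))) ^ 2 := by
        rw [mul_div_cancel₀ r two_ne_zero, min_eq_right hr1, ENNReal.ofReal_pow hr0.le]
    _ = Leb (ofLp ⁻¹' closedBall (ofLp x) (r / 2)) :=
        (measure_preimage_ofLp_closedBall Leb _ (by positivity)).symm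
    _ ≤ Leb (ball x r) := measure_mono hsub

end T2

lemma DensityBounds.le_smul {C₀ : ℝ} {Leb m : Measure T2} (h : DensityBounds C₀ Leb m) :
    m ≤ ENNReal.ofReal C₀ • Leb :=
  Measure.le_iff.2 fun s hs => (h s hs).2

lemma DensityBounds.reverse_le_smul {C₀ : ℝ} {Leb m : Measure T2} (h : DensityBounds C₀ Leb m)
    (hC₀ : 0 < C₀) : Leb ≤ ENNReal.ofReal C₀ • m := by
  refine Measure.le_iff.2 fun s hs => ?_
  calc Leb s = ENNReal.ofReal C₀ * (ENNReal.ofReal C₀⁻¹ * Leb s) := by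
        rw [← mul_assoc, ← ENNReal.ofReal_mul hC₀.le, mul_inv_cancel₀ hC₀.ne',
          ENNReal.ofReal_one, one_mul]
    _ ≤ ENNReal.ofReal C₀ * m s := by
        gcongr
        exact (h s hs).1

lemma rnormSqFun_eq_toReal_lintegral (m ν : Measure T2) [IsFiniteMeasure ν] {δ : T2 → ℝ}
    (hδ : Measurable δ) (hδ0 : ∀ x, 0 < δ x) :
    rnormSqFun m ν δ = (∫⁻ x, ν (ball x (δ x)) ^ 2 / ENNReal.ofReal (δ x ^ 4) ∂m).toReal := by
  rw [rnormSqFun, ← integral_toReal]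
  · refine integral_congr_ae (Eventually.of_forall fun x => ?_)
    dsimp only
    rw [ENNReal.toReal_div, ENNReal.toReal_pow, ENNReal.toReal_ofReal (pow_nonneg (hδ0 x).le 4)]
  · exact ((measurable_measure_ball ν hδ).pow_const 2).div
      (ENNReal.measurable_ofReal.comp (hδ.pow_const 4)) |>.aemeasurable
  · exact Eventually.of_forall fun x => ENNReal.div_lt_top
      (ENNReal.pow_ne_top (measure_ne_top _ _)) (ENNReal.ofReal_pos.2 (pow_pos (hδ0 x) 4)).ne'

lemma rinner_self_eq_toReal_lintegral (m ν : Measure T2) [IsFiniteMeasure ν] (ρ : ℝ) :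
    rinner m ν ν ρ = (ρ ^ 4)⁻¹ * (∫⁻ z, ν (ball z ρ) ^ 2 ∂m).toReal := by
  rw [rinner, one_div, ← integral_toReal]
  · simp only [sq, ENNReal.toReal_mul]
  · exact ((measurable_measure_ball ν measurable_const).pow_const 2).aemeasurable
  · exact Eventually.of_forall fun z => ENNReal.pow_lt_top (measure_lt_top _ _)

lemma lintegral_measure_ball_sq_ne_top (m ν : Measure T2) [IsFiniteMeasure m]
    [IsFiniteMeasure ν] (ρ : ℝ) : ∫⁻ z, ν (ball z ρ) ^ 2 ∂m ≠ ⊤ := by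
  refine (IsFiniteMeasure.lintegral_lt_top_of_bounded_to_ennreal m
    ⟨(ν Set.univ).toNNReal ^ 2, fun z => ?_⟩).ne
  rw [ENNReal.coe_pow, ENNReal.coe_toNNReal (measure_ne_top _ _)]
  exact pow_le_pow_left' (measure_mono (Set.subset_univ _)) 2

/-- There exists a constant `C₂ > 1`, depending only on `C₀`, such that for
any `0 < ρ ≤ δ₋ ≤ δ₊ ≤ 1`, any measurable `δ : T² → ℝ` with values in `[δ₋,δ₊]`, and any
finite Borel measure `ν` on `T²`, one has
`‖ν‖²_δ ≤ C₂·(1 + log(δ₊/δ₋))·‖ν‖²_ρ`. -/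
theorem rnormSqFun_le_of_scales
    (C₀ : ℝ) (hC₀ : 1 ≤ C₀) :
    ∃ C₂ : ℝ, 1 < C₂ ∧
      ∀ (Leb m : Measure T2), IsProbabilityMeasure Leb → Leb.IsAddHaarMeasure →
        IsProbabilityMeasure m → DensityBounds C₀ Leb m →
        ∀ ρ δminus δplus : ℝ, 0 < ρ → ρ ≤ δminus → δminus ≤ δplus → δplus ≤ 1 →
          ∀ δ : T2 → ℝ, Measurable δ → (∀ x, δ x ∈ Set.Icc δminus δplus) →
            ∀ (ν : Measure T2), IsFiniteMeasure ν →
              rnormSqFun m ν δ ≤ C₂ * (1 + Real.log (δplus / δminus)) * rinner m ν ν ρ := by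
  refine ⟨2048 * C₀ ^ 2, by nlinarith, ?_⟩
  intro Leb m _ _ _ hm ρ δm δp hρ hρδ hδmp hδp δ hδ hδmem ν _
  have hlog : 0 ≤ 1 + Real.log (δp / δm) := by
    linarith [Real.log_nonneg ((one_le_div (hρ.trans_le hρδ)).2 hδmp)]
  have key := lintegral_measure_ball_sq_div_le Leb m ν one_pos zero_le_four hm.le_smul
    (hm.reverse_le_smul (by linarith)) hρ hρδ hδmp
    (fun y => by simpa only [one_mul] using T2.le_measure_ball Leb y hρ (by linarith))
    (fun y s hs => T2.measure_ball_le Leb y hs.le) hδ hδmem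
  rw [← ENNReal.ofReal_pow (by linarith), ← ENNReal.ofReal_mul (by positivity)] at key
  rw [rnormSqFun_eq_toReal_lintegral m ν hδ fun x => hρ.trans_le (hρδ.trans (hδmem x).1),
    rinner_self_eq_toReal_lintegral]
  refine (ENNReal.toReal_mono (ENNReal.mul_ne_top ENNReal.ofReal_ne_top
    (lintegral_measure_ball_sq_ne_top m ν ρ)) key).trans_eq ?_
  rw [ENNReal.toReal_mul, ENNReal.toReal_ofReal (by positivity)]
  ring
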